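/- arXiv:2012.04122 — 6 statements merged into one kernel-verified Lean document; each statement's English description precedes it below -/
import Mathlib

section
/- Abstract energy conservation: Let $V, H$ be real inner product spaces, with differentiable curves $u, B : [0,T] \to V$ and $\rho : [0,T] \to H$. Suppose there are maps $a : V \times V \times V \to \mathbb{R}$ (trilinear, alternating in its last two arguments), a bilinear pairing, and the equations $\langle \partial_t(\rho u), v \rangle + a(\rho u, u, v) - a(B,B,v) + \tfrac{1}{2} b(u \cdot u, \rho, v) = \langle p, \operatorname{div} v \rangle$ for all $v$, $\langle \partial_t B, C \rangle + a(C, B, u) = 0$ for all $C$, and $\langle \partial_t \rho, \sigma \rangle + b(\sigma, \rho, u) = 0$ for all $\sigma$, with $\operatorname{div} u = 0$. Then the energy $E(t) = \tfrac{1}{2}\int_\Omega (\rho u \cdot u + B \cdot B)\, dx$ satisfies $\frac{dE}{dt} = 0$. -/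
open scoped RealInnerProductSpace

section EnergyBalance

variable {V H : Type*} [NormedAddCommGroup V] [InnerProductSpace ℝ V]
  [NormedAddCommGroup H] [InnerProductSpace ℝ H]

theorem apply_self_eq_zero_of_antisymm {α : Type*} {f : α → α → ℝ}
    (hf : ∀ x y, f x y = -f y x) (x : α) : f x x = 0 := by
  linarith [hf x x]

theorem hasDerivAt_half_kinetic_add_magnetic {m m' u B B' : ℝ → V} {ρ' : ℝ → H}
    {q : V → V → H} {t : ℝ}
    (hkin : HasDerivAt (fun s => ⟪m s, u s⟫) (2 * ⟪m' t, u t⟫ - ⟪ρ' t, q (u t) (u t)⟫) t)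
    (hB : HasDerivAt B (B' t) t) :
    HasDerivAt (fun s => (1 / 2 : ℝ) * (⟪m s, u s⟫ + ⟪B s, B s⟫))
      (⟪m' t, u t⟫ - (1 / 2 : ℝ) * ⟪ρ' t, q (u t) (u t)⟫ + ⟪B' t, B t⟫) t := by
  refine ((hkin.add (hB.inner ℝ hB)).const_mul (1 / 2 : ℝ)).congr_deriv ?_
  rw [real_inner_comm (B t)]
  ring

/-- Testing the momentum equation with the divergence-free velocity itself kills the pressure
and, by alternation, the transport term. -/
theorem inner_momentum_rate_self {m m' u B : V} {ρ σ p : H} {dv : V →ₗ[ℝ] H}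
    {a : V → V → V → ℝ} {b : H → H → V → ℝ} (ha : ∀ x y, a m x y = -a m y x)
    (hmom : ∀ v, ⟪m', v⟫ + a m u v - a B B v + (1 / 2 : ℝ) * b σ ρ v = ⟪p, dv v⟫)
    (hdiv : dv u = 0) :
    ⟪m', u⟫ = a B B u - (1 / 2 : ℝ) * b σ ρ u := by
  have h := hmom u
  rw [hdiv, inner_zero_right, apply_self_eq_zero_of_antisymm ha] at h
  linarith

end EnergyBalance

/-- `m t` models the momentum `ρ u`, `q x y` the pointwise product `x ⋅ y` as a scalar field
and `dv` the divergence. -/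
theorem statement5_general
    (V H : Type*) [NormedAddCommGroup V] [InnerProductSpace ℝ V]
    [NormedAddCommGroup H] [InnerProductSpace ℝ H]
    (u B B' m m' : ℝ → V) (ρ ρ' p : ℝ → H)
    (q : V →ₗ[ℝ] V →ₗ[ℝ] H) (dv : V →ₗ[ℝ] H)
    (a : V → V → V → ℝ) (b : H → H → V → ℝ)
    (ha : ∀ w x y : V, a w x y = - a w y x)
    (hB : ∀ t, HasDerivAt B (B' t) t)
    -- the derivative of ∫ ρ u ⋅ u is computed as 2⟨∂ₜ(ρu), u⟩ - ⟨∂ₜρ, u ⋅ u⟩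
    (hkin : ∀ t, HasDerivAt (fun s => ⟪m s, u s⟫)
      (2 * ⟪m' t, u t⟫ - ⟪ρ' t, q (u t) (u t)⟫) t)
    -- momentum equation
    (hmom : ∀ t, ∀ v : V,
      ⟪m' t, v⟫ + a (m t) (u t) v - a (B t) (B t) v
        + (1 / 2 : ℝ) * b (q (u t) (u t)) (ρ t) v = ⟪p t, dv v⟫)
    -- magnetic field equation
    (hmag : ∀ t, ∀ C : V, ⟪B' t, C⟫ + a C (B t) (u t) = 0)
    -- density equation
    (hden : ∀ t, ∀ σ : H, ⟪ρ' t, σ⟫ + b σ (ρ t) (u t) = 0)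
    -- incompressibility
    (hdiv : ∀ t, dv (u t) = 0) :
    ∀ t, HasDerivAt (fun s => (1 / 2 : ℝ) * (⟪m s, u s⟫ + ⟪B s, B s⟫)) 0 t := by
  intro t
  refine (hasDerivAt_half_kinetic_add_magnetic (q := fun x y => q x y) (hkin t) (hB t)).congr_deriv ?_
  have hmomentum := inner_momentum_rate_self (ha (m t)) (hmom t) (hdiv t)
  have hmagnetic := eq_neg_of_add_eq_zero_left (hmag t (B t))
  have hdensity := eq_neg_of_add_eq_zero_left (hden t (q (u t) (u t)))
  rw [hmomentum, hmagnetic, hdensity]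
  ring

/-- Abstract energy conservation for the weak formulation of inhomogeneous
incompressible MHD.  Here `V` plays the role of the space of vector fields,
`H` the space of scalar fields, `m t` represents the momentum `ρ u`,
`q x y` represents the pointwise dot product `x ⋅ y` as a scalar field,
`dv` represents the divergence operator, `a` is the trilinear form
(alternating in its last two arguments) and `b` the advection form.
Given the weak momentum, magnetic and density equations, with `div u = 0`,
the energy `E(t) = ½(⟨ρu, u⟩ + ⟨B, B⟩)` is constant. -/
theorem statement5
    (V H : Type*) [NormedAddCommGroup V] [InnerProductSpace ℝ V]
    [NormedAddCommGroup H] [InnerProductSpace ℝ H]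
    (u u' B B' m m' : ℝ → V) (ρ ρ' p : ℝ → H)
    (q : V →ₗ[ℝ] V →ₗ[ℝ] H) (dv : V →ₗ[ℝ] H)
    (a : V → V → V → ℝ) (b : H → H → V → ℝ)
    (ha : ∀ w x y : V, a w x y = - a w y x)
    (hu : ∀ t, HasDerivAt u (u' t) t)
    (hB : ∀ t, HasDerivAt B (B' t) t)
    (hm : ∀ t, HasDerivAt m (m' t) t)
    (hρ : ∀ t, HasDerivAt ρ (ρ' t) t)
    -- the derivative of ∫ ρ u ⋅ u is computed as 2⟨∂ₜ(ρu), u⟩ - ⟨∂ₜρ, u ⋅ u⟩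
    (hkin : ∀ t, HasDerivAt (fun s => ⟪m s, u s⟫)
      (2 * ⟪m' t, u t⟫ - ⟪ρ' t, q (u t) (u t)⟫) t)
    -- momentum equation
    (hmom : ∀ t, ∀ v : V,
      ⟪m' t, v⟫ + a (m t) (u t) v - a (B t) (B t) v
        + (1 / 2 : ℝ) * b (q (u t) (u t)) (ρ t) v = ⟪p t, dv v⟫)
    -- magnetic field equation
    (hmag : ∀ t, ∀ C : V, ⟪B' t, C⟫ + a C (B t) (u t) = 0)
    -- density equation
    (hden : ∀ t, ∀ σ : H, ⟪ρ' t, σ⟫ + b σ (ρ t) (u t) = 0)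
    -- incompressibility
    (hdiv : ∀ t, dv (u t) = 0) :
    ∀ t, HasDerivAt (fun s => (1 / 2 : ℝ) * (⟪m s, u s⟫ + ⟪B s, B s⟫)) 0 t :=
  statement5_general V H u B B' m m' ρ ρ' p q dv a b ha hB hkin hmom hmag hden hdiv
end

section
/- Cross-helicity conservation: Suppose $\rho \equiv 1$, $u, B$ are time-dependent divergence-free vector fields tangent to $\partial\Omega$ satisfying the weak MHD equations $\langle \partial_t u, v \rangle + a(u,u,v) - a(B,B,v) + \tfrac{1}{2} b(u \cdot u, 1, v) = \langle p, \operatorname{div} v \rangle$ for all $v$ tangent to $\partial\Omega$, and $\langle \partial_t B, C \rangle + a(C,B,u) = 0$ for all $C$ tangent to $\partial\Omega$, where $a$ is alternating in its last two arguments and $b(f, 1, w) = 0$ when $\operatorname{div} w = 0$ and $w$ is tangent to $\partial\Omega$. Then $\frac{d}{dt} \int_\Omega u \cdot B\, dx = 0$. -/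
open scoped RealInnerProductSpace

/-! Test the momentum equation with `v = B` and the induction equation with `C = u`.
Since `div B = 0`, the pressure and `b` terms drop out, and `a(B,B,B) = 0` because `a` is
alternating, so `⟨∂ₜu, B⟩ = -a(u,u,B)`; on the other side
`⟨u, ∂ₜB⟩ = -a(u,B,u) = a(u,u,B)`. The two contributions to `d/dt ⟨u, B⟩` cancel. -/

section AlternatingForm

variable {V : Type*} (a : V → V → V → ℝ)

theorem apply_self_eq_zero_of_alternating (ha : ∀ w x y : V, a w x y = - a w y x) (w x : V) :
    a w x x = 0 := by
  linarith [ha w x x]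

variable {H : Type*} [NormedAddCommGroup V] [InnerProductSpace ℝ V]
  [NormedAddCommGroup H] [InnerProductSpace ℝ H]

theorem inner_momentum_eq_neg {dv : V →ₗ[ℝ] H} {b : H → V → ℝ}
    (ha : ∀ w x y : V, a w x y = - a w y x) (hb : ∀ (f : H) (w : V), dv w = 0 → b f w = 0)
    {u u' B : V} {p f : H} (hdivB : dv B = 0)
    (hmom : ⟪u', B⟫ + a u u B - a B B B + (1 / 2 : ℝ) * b f B = ⟪p, dv B⟫) :
    ⟪u', B⟫ = - a u u B := by
  rw [hdivB, inner_zero_right, hb f B hdivB, apply_self_eq_zero_of_alternating a ha] at hmom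
  linarith

theorem inner_induction_eq (ha : ∀ w x y : V, a w x y = - a w y x) {u B B' : V}
    (hmag : ⟪B', u⟫ + a u B u = 0) :
    ⟪u, B'⟫ = a u u B := by
  rw [real_inner_comm, ha u B u] at hmag
  linarith

end AlternatingForm

/-- Abstract cross-helicity conservation for homogeneous (`ρ ≡ 1`)
incompressible MHD: `V` plays the role of the space of vector fields tangent to `∂Ω`,
`H` the space of scalar fields, `dv` the divergence, `q x y` the pointwise dot product
`x ⋅ y`, `a` the trilinear form `a(w,u,v) = ∫ w ⋅ ∇×(u×v)` and `b f w` the form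
`b(f, 1, w)`. -/
theorem statement6_general
    (V H : Type*) [NormedAddCommGroup V] [InnerProductSpace ℝ V]
    [NormedAddCommGroup H] [InnerProductSpace ℝ H]
    (u u' B B' : ℝ → V) (p : ℝ → H)
    (q : V →ₗ[ℝ] V →ₗ[ℝ] H) (dv : V →ₗ[ℝ] H)
    (a : V → V → V → ℝ) (b : H → V → ℝ)
    (ha : ∀ w x y : V, a w x y = - a w y x)
    (hb : ∀ (f : H) (w : V), dv w = 0 → b f w = 0)
    (hu : ∀ t, HasDerivAt u (u' t) t)
    (hB : ∀ t, HasDerivAt B (B' t) t)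
    -- incompressibility and div B = 0
    (hdivB : ∀ t, dv (B t) = 0)
    -- momentum equation with ρ ≡ 1
    (hmom : ∀ t, ∀ v : V,
      ⟪u' t, v⟫ + a (u t) (u t) v - a (B t) (B t) v
        + (1 / 2 : ℝ) * b (q (u t) (u t)) v = ⟪p t, dv v⟫)
    -- magnetic field equation
    (hmag : ∀ t, ∀ C : V, ⟪B' t, C⟫ + a C (B t) (u t) = 0) :
    ∀ t, HasDerivAt (fun s => ⟪u s, B s⟫) 0 t := by
  intro t
  have hcancel : ⟪u t, B' t⟫ + ⟪u' t, B t⟫ = 0 := by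
    rw [inner_induction_eq a ha (hmag t (u t)),
      inner_momentum_eq_neg a ha hb (hdivB t) (hmom t (B t))]
    ring
  simpa only [hcancel] using (hu t).inner ℝ (hB t)

/-- Abstract cross-helicity conservation for homogeneous (`ρ ≡ 1`)
incompressible MHD.  `V` plays the role of the space of (divergence-free)
vector fields tangent to `∂Ω`, `H` the space of scalar fields, `dv` the
divergence operator, `q x y` the pointwise dot product `x ⋅ y`,
`a` the trilinear form `a(w,u,v) = ∫ w ⋅ ∇×(u×v)` (alternating in its last
two arguments), and `b f w` the form `b(f, 1, w)`, which vanishes whenever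
`div w = 0`.  Then the cross-helicity `⟨u, B⟩` is constant in time. -/
theorem statement6
    (V H : Type*) [NormedAddCommGroup V] [InnerProductSpace ℝ V]
    [NormedAddCommGroup H] [InnerProductSpace ℝ H]
    (u u' B B' : ℝ → V) (p : ℝ → H)
    (q : V →ₗ[ℝ] V →ₗ[ℝ] H) (dv : V →ₗ[ℝ] H)
    (a : V → V → V → ℝ) (b : H → V → ℝ)
    (ha : ∀ w x y : V, a w x y = - a w y x)
    (hb : ∀ (f : H) (w : V), dv w = 0 → b f w = 0)
    (hu : ∀ t, HasDerivAt u (u' t) t)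
    (hB : ∀ t, HasDerivAt B (B' t) t)
    -- incompressibility and div B = 0
    (hdivu : ∀ t, dv (u t) = 0)
    (hdivB : ∀ t, dv (B t) = 0)
    -- momentum equation with ρ ≡ 1
    (hmom : ∀ t, ∀ v : V,
      ⟪u' t, v⟫ + a (u t) (u t) v - a (B t) (B t) v
        + (1 / 2 : ℝ) * b (q (u t) (u t)) v = ⟪p t, dv v⟫)
    -- magnetic field equation
    (hmag : ∀ t, ∀ C : V, ⟪B' t, C⟫ + a C (B t) (u t) = 0) :
    ∀ t, HasDerivAt (fun s => ⟪u s, B s⟫) 0 t :=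
  statement6_general V H u u' B B' p q dv a b ha hb hu hB hdivB hmom hmag
end

section
/- Discrete magnetic helicity conservation (abstract form): Let $V$ be an inner product space of vector fields and let $B_k, B_{k+1}, u \in V$ with $B_{k+1} - B_k = -\Delta t\, \nabla \times E$ for some $E$, and suppose that for any vector fields $A_k, A_{k+1}$ with $\nabla \times A_k = B_k$, $\nabla \times A_{k+1} = B_{k+1}$, and $A_k \times n = A_{k+1} \times n = 0$ on $\partial\Omega$, the trilinear form satisfies $a_h(A, B_{k+1/2}, u) = 0$ whenever $\nabla \times A = B_{k+1/2}$, and the update satisfies $\langle (B_{k+1} - B_k)/\Delta t, C \rangle = -a_h(C, B_{k+1/2}, u)$ for all relevant test fields $C$, including $C = A_{k+1/2} := (A_k + A_{k+1})/2$ modulo projection. Then $\int_\Omega A_{k+1} \cdot B_{k+1}\, dx = \int_\Omega A_k \cdot B_k\, dx$. -/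
open scoped RealInnerProductSpace

/-! The change of helicity is `⟪B₁ - B₀, A₀ + A₁⟫`, because symmetry of the curl makes the
cross terms `⟪A₁, B₀⟫` and `⟪A₀, B₁⟫` equal. The midpoint potential `(A₀ + A₁)/2` has curl
`B_{1/2}`, so it is an admissible test field on which `a_h` vanishes; the update equation then
makes `B₁ - B₀` orthogonal to it. -/

theorem LinearMap.IsSymmetric.inner_map_sub_inner_map {V : Type*} [NormedAddCommGroup V]
    [InnerProductSpace ℝ V] {T : V →ₗ[ℝ] V} (hT : T.IsSymmetric) (A₀ A₁ : V) :
    ⟪A₁, T A₁⟫ - ⟪A₀, T A₀⟫ = ⟪T A₁ - T A₀, A₀ + A₁⟫ := by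
  have hcross : ⟪T A₁, A₀⟫ = ⟪T A₀, A₁⟫ := by
    rw [hT, real_inner_comm]
  simp only [inner_sub_left, inner_add_right, real_inner_comm (T A₁) A₁,
    real_inner_comm (T A₀) A₀, hcross]
  ring

theorem statement11_general
    (V : Type*) [NormedAddCommGroup V] [InnerProductSpace ℝ V]
    (curlOp : V →ₗ[ℝ] V)
    (hsym : ∀ X Y : V, ⟪curlOp X, Y⟫ = ⟪X, curlOp Y⟫)
    (B₀ B₁ u A₀ A₁ : V) (Δt : ℝ) (hΔt : 0 < Δt)
    (hA₀ : curlOp A₀ = B₀) (hA₁ : curlOp A₁ = B₁)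
    (a_h : V → V → V → ℝ)
    (hvanish : ∀ A : V, curlOp A = (1 / 2 : ℝ) • (B₀ + B₁) →
      a_h A ((1 / 2 : ℝ) • (B₀ + B₁)) u = 0)
    (hmag : ∀ C : V,
      ⟪Δt⁻¹ • (B₁ - B₀), C⟫ = - a_h C ((1 / 2 : ℝ) • (B₀ + B₁)) u) :
    ⟪A₁, B₁⟫ = ⟪A₀, B₀⟫ := by
  set Aₕ : V := (1 / 2 : ℝ) • (A₀ + A₁)
  have hcurl : curlOp Aₕ = (1 / 2 : ℝ) • (B₀ + B₁) := by
    rw [map_smul, map_add, hA₀, hA₁]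
  have hortho : ⟪B₁ - B₀, Aₕ⟫ = 0 := by
    have h := hmag Aₕ
    rw [hvanish Aₕ hcurl, neg_zero, real_inner_smul_left] at h
    exact (mul_eq_zero.mp h).resolve_left (inv_ne_zero hΔt.ne')
  have hchange := LinearMap.IsSymmetric.inner_map_sub_inner_map hsym A₀ A₁
  rw [hA₀, hA₁] at hchange
  rw [real_inner_smul_right] at hortho
  linarith

/-- Discrete magnetic helicity conservation (abstract form).  `V` is an inner
product space of (discrete) vector fields, `curlOp` the curl operator, which
is symmetric for the fields involved (integration by parts with the boundary
conditions `A × n = 0`).  If `B₁ - B₀ = -Δt ∇×E`, the update satisfies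
`⟨(B₁-B₀)/Δt, C⟩ = -a_h(C, B_{1/2}, u)` for all test fields `C`, and
`a_h(A, B_{1/2}, u) = 0` whenever `∇×A = B_{1/2}`, then for potentials
`A₀, A₁` with `∇×A₀ = B₀` and `∇×A₁ = B₁` one has `⟨A₁, B₁⟩ = ⟨A₀, B₀⟩`. -/
theorem statement11
    (V : Type*) [NormedAddCommGroup V] [InnerProductSpace ℝ V]
    (curlOp : V →ₗ[ℝ] V)
    (hsym : ∀ X Y : V, ⟪curlOp X, Y⟫ = ⟪X, curlOp Y⟫)
    (B₀ B₁ u E A₀ A₁ : V) (Δt : ℝ) (hΔt : 0 < Δt)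
    (hupd : B₁ - B₀ = -Δt • curlOp E)
    (hA₀ : curlOp A₀ = B₀) (hA₁ : curlOp A₁ = B₁)
    (a_h : V → V → V → ℝ)
    (hvanish : ∀ A : V, curlOp A = (1 / 2 : ℝ) • (B₀ + B₁) →
      a_h A ((1 / 2 : ℝ) • (B₀ + B₁)) u = 0)
    (hmag : ∀ C : V,
      ⟪Δt⁻¹ • (B₁ - B₀), C⟫ = - a_h C ((1 / 2 : ℝ) • (B₀ + B₁)) u) :
    ⟪A₁, B₁⟫ = ⟪A₀, B₀⟫ :=
  statement11_general V curlOp hsym B₀ B₁ u A₀ A₁ Δt hΔt hA₀ hA₁ a_h hvanish hmag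
end

section
/- Vanishing of the doubly-projected trilinear form: Let $P : L^2(\Omega)^3 \to U$ be the orthogonal projection onto a subspace $U$ of vector fields whose elements $F$ satisfy $n \times F = 0$ on $\partial\Omega$, and define $a_h(w,u,v) = \int_\Omega w \cdot \nabla \times P(Pu \times Pv)\, dx$. If $\nabla \times w = u$ (weakly), then $a_h(w,u,v) = 0$ for all $v$. -/
open scoped RealInnerProductSpace

theorem statement13_general
    (V : Type*) [NormedAddCommGroup V] [InnerProductSpace ℝ V]
    (U : Submodule ℝ V) [CompleteSpace U]
    (curlOp : V →ₗ[ℝ] V)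
    (cross : V →ₗ[ℝ] V →ₗ[ℝ] V)
    (hcross : ∀ x y : V, ⟪x, cross x y⟫ = 0)
    (hIBP : ∀ (w : V) (F : U), ⟪w, curlOp F⟫ = ⟪curlOp w, (F : V)⟫)
    (w u v : V) (hw : curlOp w = u) :
    ⟪w, curlOp ((Submodule.orthogonalProjection U
        (cross ((Submodule.orthogonalProjection U u : V))
               ((Submodule.orthogonalProjection U v : V))) : V))⟫ = 0 := by
  simp only [← Submodule.starProjection_apply]
  calc ⟪w, curlOp (U.starProjection (cross (U.starProjection u) (U.starProjection v)))⟫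
      = ⟪u, U.starProjection (cross (U.starProjection u) (U.starProjection v))⟫ := by
        rw [Submodule.starProjection_apply, hIBP, hw]
    _ = ⟪U.starProjection u, cross (U.starProjection u) (U.starProjection v)⟫ :=
        (U.inner_starProjection_left_eq_right _ _).symm
    _ = 0 := hcross _ _

/-- Vanishing of the doubly-projected trilinear form.  `V` plays the role of
`L²(Ω)³`, `U ⊂ H₀(curl, Ω)` is a closed subspace whose elements `F` satisfy
`n × F = 0` on `∂Ω`, `P` is the `L²`-orthogonal projection onto `U`, `cross`
is the pointwise cross product (so `⟨x, cross x y⟩ = 0`), and integration by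
parts `⟨w, ∇×F⟩ = ⟨∇×w, F⟩` is valid for `F ∈ U`.  With
`a_h(w,u,v) = ⟨w, ∇×P(Pu × Pv)⟩`, if `∇×w = u` then `a_h(w,u,v) = 0`. -/
theorem statement13
    (V : Type*) [NormedAddCommGroup V] [InnerProductSpace ℝ V] [CompleteSpace V]
    (U : Submodule ℝ V) [CompleteSpace U]
    (curlOp : V →ₗ[ℝ] V)
    (cross : V →ₗ[ℝ] V →ₗ[ℝ] V)
    (hcross : ∀ x y : V, ⟪x, cross x y⟫ = 0)
    (hIBP : ∀ (w : V) (F : U), ⟪w, curlOp F⟫ = ⟪curlOp w, (F : V)⟫)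
    (w u v : V) (hw : curlOp w = u) :
    ⟪w, curlOp ((Submodule.orthogonalProjection U
        (cross ((Submodule.orthogonalProjection U u : V))
               ((Submodule.orthogonalProjection U v : V))) : V))⟫ = 0 :=
  statement13_general V U curlOp cross hcross hIBP w u v hw
end

section
/- Abstract fully-discrete energy conservation: Let $V, H$ be real inner product spaces, $u_k, u_{k+1}, B_k, B_{k+1} \in V$, $\rho_k, \rho_{k+1}, \theta \in H$, and write midpoints $u = (u_k+u_{k+1})/2$, $B = (B_k+B_{k+1})/2$, $\rho = (\rho_k+\rho_{k+1})/2$, $\rho u = (\rho_k u_k + \rho_{k+1} u_{k+1})/2$. Suppose: (i) $a_h$ is trilinear and alternating in its last two arguments; (ii) the momentum update $\langle (\rho_{k+1}u_{k+1} - \rho_k u_k)/\Delta t, v \rangle + a_h(\rho u, u, v) - a_h(B,B,v) + \tilde b(\theta, \rho, v) = \langle p_{k+1}, \operatorname{div} v \rangle$ holds for all $v$, and holds with $v = u$ where $\operatorname{div} u = 0$; (iii) the magnetic update $\langle (B_{k+1}-B_k)/\Delta t, C \rangle + a_h(C, B, u) = 0$ holds for $C = B$; (iv) the density update $\langle (\rho_{k+1}-\rho_k)/\Delta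 t, \sigma \rangle + \tilde b(\sigma, \rho, u) = 0$ holds for $\sigma = \theta$; (v) $\theta$ satisfies $\langle \theta, \tau \rangle = \tfrac12 \langle u_k \cdot u_{k+1}, \tau \rangle$ for all $\tau \in H$, and $u_k \cdot u_{k+1}$ pairs with $H$ through its projection $\theta$. Then the discrete energy is conserved: $\langle \rho_{k+1} u_{k+1}, u_{k+1} \rangle + \|B_{k+1}\|^2 = \langle \rho_k u_k, u_k \rangle + \|B_k\|^2$. -/
/-!
Test the momentum update with the midpoint velocity `u`, the magnetic update with the midpoint
field `B` and the density update with `θ`. The pressure term vanishes since `div u = 0`, the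
convective term `a_h(ρu, u, u)` vanishes by antisymmetry, and the Lorentz term `a_h(B, B, u)`
cancels against the magnetic update. Expanding `⟨m₁ - m₀, u⟩` leaves the cross term
`⟨m₁, u₀⟩ - ⟨m₀, u₁⟩ = 2⟨θ, ρ₁ - ρ₀⟩`, a discrete product rule (this is why `θ` is the
projection of `½ u₀ ⋅ u₁`), and the density update cancels it together with the `btil` term.
-/

open scoped RealInnerProductSpace

section MidpointInner

variable {E : Type*} [NormedAddCommGroup E] [InnerProductSpace ℝ E]

theorem inner_sub_midpoint (x₀ x₁ y₀ y₁ : E) :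
    ⟪x₁ - x₀, (1 / 2 : ℝ) • (y₀ + y₁)⟫
      = 1 / 2 * (⟪x₁, y₁⟫ - ⟪x₀, y₀⟫) + 1 / 2 * (⟪x₁, y₀⟫ - ⟪x₀, y₁⟫) := by
  rw [real_inner_smul_right, inner_sub_left, inner_add_right, inner_add_right]
  ring

theorem inner_sub_midpoint_self (x₀ x₁ : E) :
    ⟪x₁ - x₀, (1 / 2 : ℝ) • (x₀ + x₁)⟫ = 1 / 2 * (‖x₁‖ ^ 2 - ‖x₀‖ ^ 2) := by
  rw [inner_sub_midpoint, real_inner_comm x₀ x₁, real_inner_self_eq_norm_sq,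
    real_inner_self_eq_norm_sq]
  ring

end MidpointInner

theorem inner_momentum_cross_eq {V H : Type*} [Inner ℝ V]
    [NormedAddCommGroup H] [InnerProductSpace ℝ H]
    {u₀ u₁ m₀ m₁ : V} {ρ₀ ρ₁ θ : H} {q : V → V → H} (hq : q u₁ u₀ = q u₀ u₁)
    (hm₀ : ∀ v : V, ⟪m₀, v⟫ = ⟪ρ₀, q u₀ v⟫) (hm₁ : ∀ v : V, ⟪m₁, v⟫ = ⟪ρ₁, q u₁ v⟫)
    (hθ : ∀ τ : H, ⟪θ, τ⟫ = (1 / 2 : ℝ) * ⟪q u₀ u₁, τ⟫) :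
    ⟪m₁, u₀⟫ - ⟪m₀, u₁⟫ = 2 * ⟪θ, ρ₁ - ρ₀⟫ := by
  rw [hm₁, hm₀, hq, hθ, inner_sub_right, real_inner_comm ρ₁, real_inner_comm ρ₀]
  ring

/-- Abstract fully-discrete energy conservation.  `V` is the space of discrete
vector fields, `H` the space of discrete scalar fields, `q x y` represents the
pointwise dot product `x ⋅ y ∈ H`, `m₀ = ρ₀u₀`, `m₁ = ρ₁u₁` are the momenta
(encoded through `hm₀`, `hm₁`), `dv` is the divergence operator, `a_h` is the
trilinear form (alternating in its last two arguments), and `btil` is the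
(possibly upwinded) advection form.  Under the discrete momentum, magnetic and
density updates, with `θ = ½ u₀⋅u₁` and `div u_{1/2} = 0`, the discrete energy
`⟨ρu, u⟩ + ‖B‖²` is conserved. -/
theorem statement16
    (V H : Type*) [NormedAddCommGroup V] [InnerProductSpace ℝ V]
    [NormedAddCommGroup H] [InnerProductSpace ℝ H]
    (Δt : ℝ) (hΔt : 0 < Δt)
    (u₀ u₁ B₀ B₁ m₀ m₁ : V) (ρ₀ ρ₁ θ p : H)
    (q : V →ₗ[ℝ] V →ₗ[ℝ] H) (hq_symm : ∀ x y : V, q x y = q y x)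
    (dv : V →ₗ[ℝ] H)
    (a_h : V → V → V → ℝ)
    (ha : ∀ w x y : V, a_h w x y = - a_h w y x)
    (btil : H → H → V → ℝ)
    -- the momenta m₀ = ρ₀u₀ and m₁ = ρ₁u₁ pair via the pointwise dot product
    (hm₀ : ∀ v : V, ⟪m₀, v⟫ = ⟪ρ₀, q u₀ v⟫)
    (hm₁ : ∀ v : V, ⟪m₁, v⟫ = ⟪ρ₁, q u₁ v⟫)
    -- θ is (the projection of) ½ u₀⋅u₁
    (hθ : ∀ τ : H, ⟪θ, τ⟫ = (1 / 2 : ℝ) * ⟪q u₀ u₁, τ⟫)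
    -- momentum update, for all test fields v
    (hmom : ∀ v : V,
      ⟪Δt⁻¹ • (m₁ - m₀), v⟫
        + a_h ((1 / 2 : ℝ) • (m₀ + m₁)) ((1 / 2 : ℝ) • (u₀ + u₁)) v
        - a_h ((1 / 2 : ℝ) • (B₀ + B₁)) ((1 / 2 : ℝ) • (B₀ + B₁)) v
        + btil θ ((1 / 2 : ℝ) • (ρ₀ + ρ₁)) v
      = ⟪p, dv v⟫)
    -- incompressibility of the midpoint velocity
    (hdiv : dv ((1 / 2 : ℝ) • (u₀ + u₁)) = 0)
    -- magnetic update, tested with C = B_{1/2}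
    (hmag : ⟪Δt⁻¹ • (B₁ - B₀), (1 / 2 : ℝ) • (B₀ + B₁)⟫
        + a_h ((1 / 2 : ℝ) • (B₀ + B₁)) ((1 / 2 : ℝ) • (B₀ + B₁))
            ((1 / 2 : ℝ) • (u₀ + u₁)) = 0)
    -- density update, tested with σ = θ
    (hden : ⟪Δt⁻¹ • (ρ₁ - ρ₀), θ⟫
        + btil θ ((1 / 2 : ℝ) • (ρ₀ + ρ₁)) ((1 / 2 : ℝ) • (u₀ + u₁)) = 0) :
    ⟪m₁, u₁⟫ + ‖B₁‖ ^ 2 = ⟪m₀, u₀⟫ + ‖B₀‖ ^ 2 := by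
  have hconv : a_h ((1 / 2 : ℝ) • (m₀ + m₁)) ((1 / 2 : ℝ) • (u₀ + u₁))
      ((1 / 2 : ℝ) • (u₀ + u₁)) = 0 := CharZero.eq_neg_self_iff.mp (ha _ _ _)
  have hmom_u := hmom ((1 / 2 : ℝ) • (u₀ + u₁))
  rw [hdiv, inner_zero_right, hconv, real_inner_smul_left, inner_sub_midpoint,
    inner_momentum_cross_eq (q := fun x y ↦ q x y) (hq_symm u₁ u₀) hm₀ hm₁ hθ] at hmom_u
  rw [real_inner_smul_left, inner_sub_midpoint_self] at hmag
  rw [real_inner_smul_left, real_inner_comm] at hden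
  have henergy : Δt⁻¹ * (⟪m₁, u₁⟫ + ‖B₁‖ ^ 2 - (⟪m₀, u₀⟫ + ‖B₀‖ ^ 2)) = 0 := by
    linear_combination 2 * (hmom_u + hmag - hden)
  have := (mul_eq_zero.mp henergy).resolve_left (inv_ne_zero hΔt.ne')
  linarith
end

section
/- Fully-discrete cross-helicity conservation (constant density): Suppose $\rho \equiv 1$, $\operatorname{div} B_{k+1/2} = 0$, and the updates $\langle (u_{k+1}-u_k)/\Delta t, v \rangle + a_h(u,u,v) - a_h(B,B,v) + \tfrac12 \tilde b(u_k \cdot u_{k+1}, 1, v) = \langle p_{k+1}, \operatorname{div} v \rangle$ and $\langle (B_{k+1}-B_k)/\Delta t, C \rangle + a_h(C,B,u) = 0$ hold with $v = B := B_{k+1/2}$ and $C = u := u_{k+1/2}$, where $a_h$ is alternating in its last two arguments and $\tilde b(f, 1, w) = 0$. Then $\langle u_{k+1}, B_{k+1} \rangle = \langle u_k, B_k \rangle$. -/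
/-!
Test the momentum update with `B_{k+1/2}` and the induction update with `u_{k+1/2}`. The
pressure term drops out since `div B_{k+1/2} = 0`, and so do `b̃` and `a_h(B, B, B)`; by the
antisymmetry of `a_h` the two remaining convection terms cancel, so the two discrete time
derivatives sum to zero. The polarization identity turns that sum into the increment of the
cross helicity.
-/

open scoped RealInnerProductSpace

theorem inner_sub_inner_eq_mul_inner_midpoint {V : Type*} [NormedAddCommGroup V]
    [InnerProductSpace ℝ V] {Δt : ℝ} (hΔt : Δt ≠ 0) (u₀ u₁ B₀ B₁ : V) :
    ⟪u₁, B₁⟫ - ⟪u₀, B₀⟫ = Δt * (⟪Δt⁻¹ • (u₁ - u₀), (1 / 2 : ℝ) • (B₀ + B₁)⟫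
      + ⟪Δt⁻¹ • (B₁ - B₀), (1 / 2 : ℝ) • (u₀ + u₁)⟫) := by
  simp only [real_inner_smul_left, real_inner_smul_right, inner_sub_left, inner_sub_right,
    inner_add_right, real_inner_comm u₀, real_inner_comm u₁]
  field_simp
  ring

/-- Fully-discrete cross-helicity conservation for constant density (`ρ ≡ 1`).
`V` is the space of discrete vector fields, `H` of discrete scalar fields,
`dv` the divergence operator, `q u₀ u₁` the pointwise dot product
`u₀ ⋅ u₁ ∈ H`, `a_h` a trilinear form alternating in its last two arguments,
and `bt f w` the upwinded form `b̃(f, 1, w)`, which vanishes for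
divergence-free `w`.  If the momentum update holds with `v = B_{1/2}` and the
magnetic update with `C = u_{1/2}`, and `div B_{1/2} = 0`, then
`⟨u₁, B₁⟩ = ⟨u₀, B₀⟩`. -/
theorem statement17
    (V H : Type*) [NormedAddCommGroup V] [InnerProductSpace ℝ V]
    [NormedAddCommGroup H] [InnerProductSpace ℝ H]
    (Δt : ℝ) (hΔt : 0 < Δt)
    (u₀ u₁ B₀ B₁ : V) (p : H)
    (q : V →ₗ[ℝ] V →ₗ[ℝ] H) (dv : V →ₗ[ℝ] H)
    (a_h : V → V → V → ℝ)
    (ha : ∀ w x y : V, a_h w x y = - a_h w y x)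
    (bt : H → V → ℝ)
    (hbt : ∀ (f : H) (w : V), dv w = 0 → bt f w = 0)
    (hdivB : dv ((1 / 2 : ℝ) • (B₀ + B₁)) = 0)
    -- momentum update tested with v = B_{1/2}
    (hmom : ⟪Δt⁻¹ • (u₁ - u₀), (1 / 2 : ℝ) • (B₀ + B₁)⟫
        + a_h ((1 / 2 : ℝ) • (u₀ + u₁)) ((1 / 2 : ℝ) • (u₀ + u₁))
            ((1 / 2 : ℝ) • (B₀ + B₁))
        - a_h ((1 / 2 : ℝ) • (B₀ + B₁)) ((1 / 2 : ℝ) • (B₀ + B₁))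
            ((1 / 2 : ℝ) • (B₀ + B₁))
        + (1 / 2 : ℝ) * bt (q u₀ u₁) ((1 / 2 : ℝ) • (B₀ + B₁))
      = ⟪p, dv ((1 / 2 : ℝ) • (B₀ + B₁))⟫)
    -- magnetic update tested with C = u_{1/2}
    (hmag : ⟪Δt⁻¹ • (B₁ - B₀), (1 / 2 : ℝ) • (u₀ + u₁)⟫
        + a_h ((1 / 2 : ℝ) • (u₀ + u₁)) ((1 / 2 : ℝ) • (B₀ + B₁))
            ((1 / 2 : ℝ) • (u₀ + u₁)) = 0) :
    ⟪u₁, B₁⟫ = ⟪u₀, B₀⟫ := by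
  set u := (1 / 2 : ℝ) • (u₀ + u₁)
  set B := (1 / 2 : ℝ) • (B₀ + B₁)
  have hBBB : a_h B B B = 0 := by linarith [ha B B B]
  rw [hdivB, inner_zero_right, hbt _ _ hdivB, hBBB] at hmom
  rw [ha u B u] at hmag
  rw [← sub_eq_zero, inner_sub_inner_eq_mul_inner_midpoint hΔt.ne']
  exact mul_eq_zero_of_right Δt (by linarith)
end
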